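/- arXiv:1905.03232 — 5 statements merged into one kernel-verified Lean document; each statement's English description precedes it below -/
import Mathlib

section
/- Let (X, μ) be a measure space, p ∈ (1,∞), q ∈ [1,∞), and let f₁,…,f_{n₀} be measurable functions with pairwise disjoint supports A₁,…,A_{n₀}. Assume that for each n ≥ 2 and each t > 0, either d_{f_n}(t) ≥ μ(A₁ ∪ ⋯ ∪ A_{n−1}) or d_{f_n}(t) = 0, where d_g(t) = μ{x : |g(x)| ≥ t} is the distribution function. Then there is a constant C₁ = C₁(p,q), independent of X, n₀, and the functions, such that (1/C₁)·(∑_{n=1}^{n₀} ‖f_n‖_{p,q}^q)^{1/q} ≤ ‖∑_{n=1}^{n₀} f_n‖_{p,q} ≤ C₁·(∑_{n=1}^{n₀} ‖f_n‖_{p,q}^q)^{1/q}, where ‖·‖_{p,q} is the Lorentz quasi-norm. -/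
open MeasureTheory ENNReal NNReal Set Filter

/-- The distribution function `d_f(t) = μ {x : t ≤ |f x|}`. -/
noncomputable def distFun {X : Type*} [MeasurableSpace X] (μ : Measure X) (f : X → ℝ) (t : ℝ) :
    ℝ≥0∞ :=
  μ {x | t ≤ |f x|}

/-- The Lorentz quasi-norm `‖f‖_{p,q}` (with `q = ⊤` giving the weak-type norm). -/
noncomputable def lorentzNorm {X : Type*} [MeasurableSpace X] (μ : Measure X) (p : ℝ)
    (q : ℝ≥0∞) (f : X → ℝ) : ℝ≥0∞ :=
  if q = ⊤ then ⨆ t ∈ Ioi (0 : ℝ), ENNReal.ofReal t * distFun μ f t ^ (1 / p)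
  else ENNReal.ofReal p ^ (1 / q.toReal) *
    (∫⁻ t in Ioi (0 : ℝ),
      (ENNReal.ofReal t * distFun μ f t ^ (1 / p)) ^ q.toReal / ENNReal.ofReal t) ^ (1 / q.toReal)

lemma up_aux (r : ℝ) (hr : 0 < r) (n : ℕ) (a : ℕ → ℝ≥0∞)
    (h : ∀ i < n, (∑ j ∈ Finset.range i, a j) ≤ a i ∨ a i = 0) :
    (∑ j ∈ Finset.range n, a j) ^ r ≤ 2 ^ r * ∑ j ∈ Finset.range n, a j ^ r := by
  induction n with
  | zero => simp [ENNReal.zero_rpow_of_pos hr]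
  | succ n ih =>
    rcases h n (Nat.lt_succ_self n) with hle | h0
    · rw [Finset.sum_range_succ, Finset.sum_range_succ]
      calc (∑ j ∈ Finset.range n, a j + a n) ^ r ≤ (a n + a n) ^ r := by
            gcongr
        _ = 2 ^ r * a n ^ r := by
            rw [← two_mul, ENNReal.mul_rpow_of_nonneg _ _ hr.le]
        _ ≤ 2 ^ r * (∑ j ∈ Finset.range n, a j ^ r + a n ^ r) := by
            gcongr; exact le_add_self
    · rw [Finset.sum_range_succ, Finset.sum_range_succ, h0,
        ENNReal.zero_rpow_of_pos hr, add_zero, add_zero]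
      exact ih (fun i hi => h i (hi.trans (Nat.lt_succ_self n)))

lemma down_aux (r : ℝ) (hr : 0 < r) (n : ℕ) (a : ℕ → ℝ≥0∞)
    (h : ∀ i < n, (∑ j ∈ Finset.range i, a j) ≤ a i ∨ a i = 0) :
    ((2:ℝ≥0∞) ^ r - 1) * ∑ j ∈ Finset.range n, a j ^ r ≤
      2 ^ r * (∑ j ∈ Finset.range n, a j) ^ r := by
  have h1 : (1:ℝ≥0∞) ≤ 2 ^ r := by
    calc (1:ℝ≥0∞) = 2 ^ (0:ℝ) := by simp
    _ ≤ 2 ^ r := ENNReal.rpow_le_rpow_of_exponent_le one_le_two hr.le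
  induction n with
  | zero => simp
  | succ n ih =>
    have ih' := ih (fun i hi => h i (hi.trans (Nat.lt_succ_self n)))
    rcases h n (Nat.lt_succ_self n) with hle | h0
    · rw [Finset.sum_range_succ, Finset.sum_range_succ, mul_add]
      have key : (2:ℝ≥0∞) ^ r * (∑ j ∈ Finset.range n, a j) ^ r ≤
          (∑ j ∈ Finset.range n, a j + a n) ^ r := by
        calc (2:ℝ≥0∞) ^ r * (∑ j ∈ Finset.range n, a j) ^ r
            = (2 * ∑ j ∈ Finset.range n, a j) ^ r := by
              rw [ENNReal.mul_rpow_of_nonneg _ _ hr.le]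
          _ ≤ (∑ j ∈ Finset.range n, a j + a n) ^ r := by
              rw [two_mul]; gcongr
      have ha : a n ^ r ≤ (∑ j ∈ Finset.range n, a j + a n) ^ r := by
        gcongr; exact le_add_self
      calc ((2:ℝ≥0∞) ^ r - 1) * ∑ j ∈ Finset.range n, a j ^ r + (2 ^ r - 1) * a n ^ r
          ≤ (∑ j ∈ Finset.range n, a j + a n) ^ r +
              (2 ^ r - 1) * (∑ j ∈ Finset.range n, a j + a n) ^ r := by
            gcongr
            exact ih'.trans key
        _ = 2 ^ r * (∑ j ∈ Finset.range n, a j + a n) ^ r := by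
            rw [← one_add_mul]
            congr 1
            rw [add_comm]
            exact tsub_add_cancel_of_le h1
    · rw [Finset.sum_range_succ, Finset.sum_range_succ, h0,
        ENNReal.zero_rpow_of_pos hr, add_zero, add_zero]
      exact ih'

lemma fin_pointwise (r : ℝ) (hr : 0 < r) (n : ℕ) (a : Fin n → ℝ≥0∞)
    (h : ∀ i : Fin n,
      (∑ j ∈ Finset.univ.filter (fun j : Fin n => (j : ℕ) < (i : ℕ)), a j) ≤ a i ∨ a i = 0) :
    (∑ i, a i) ^ r ≤ 2 ^ r * ∑ i, a i ^ r ∧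
      ((2:ℝ≥0∞) ^ r - 1) * ∑ i, a i ^ r ≤ 2 ^ r * (∑ i, a i) ^ r := by
  set b : ℕ → ℝ≥0∞ := fun k => if hk : k < n then a ⟨k, hk⟩ else 0 with hbdef
  have hb : ∀ i : Fin n, b (i : ℕ) = a i := by
    intro i; simp [hbdef, i.isLt]
  have hsum : ∀ k : ℕ, k ≤ n →
      (∑ j ∈ Finset.univ.filter (fun j : Fin n => (j : ℕ) < k), a j) =
        ∑ j ∈ Finset.range k, b j := by
    intro k hk
    rw [Finset.sum_filter]
    have e1 : ∀ j : Fin n, (if (j : ℕ) < k then a j else 0) =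
        (fun m => if m < k then b m else 0) (j : ℕ) := by
      intro j; simp only [hb]
    rw [Finset.sum_congr rfl (fun j _ => e1 j),
      Fin.sum_univ_eq_sum_range (fun m => if m < k then b m else 0) n]
    rw [← Finset.sum_subset (Finset.range_subset_range.2 hk)
      (fun x _ hx => if_neg (by simpa using hx))]
    exact Finset.sum_congr rfl (fun x hx => if_pos (Finset.mem_range.1 hx))
  have hhyp : ∀ i < n, (∑ j ∈ Finset.range i, b j) ≤ b i ∨ b i = 0 := by
    intro i hi
    have := h ⟨i, hi⟩
    rw [← hb ⟨i, hi⟩] at this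
    rwa [hsum i hi.le] at this
  have e2 : ∑ i : Fin n, a i = ∑ j ∈ Finset.range n, b j := by
    rw [← Fin.sum_univ_eq_sum_range]
    exact Finset.sum_congr rfl (fun i _ => (hb i).symm)
  have e3 : ∑ i : Fin n, a i ^ r = ∑ j ∈ Finset.range n, b j ^ r := by
    rw [← Fin.sum_univ_eq_sum_range (fun k => b k ^ r)]
    exact Finset.sum_congr rfl (fun i _ => by rw [hb i])
  rw [e2, e3]
  exact ⟨up_aux r hr n b hhyp, down_aux r hr n b hhyp⟩

/-- Lemma 2.4 (case `q < ∞`): for functions with pairwise disjoint supports whose distribution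
functions dominate the total measure of the preceding supports, the Lorentz norm of the sum is
comparable to the `ℓ^q`-sum of the Lorentz norms, with a constant `C₁(p,q)` independent of the
space, of `n₀`, and of the functions. -/
theorem lorentz_disjoint_sum (p q : ℝ) (hp : 1 < p) (hq : 1 ≤ q) :
    ∃ C : ℝ≥0, 0 < C ∧ ∀ (X : Type) (_ : MeasurableSpace X) (μ : Measure X) (n₀ : ℕ)
      (f : Fin n₀ → X → ℝ), (∀ i, Measurable (f i)) →
      Pairwise (fun i j => Disjoint (Function.support (f i)) (Function.support (f j))) →
      (∀ i : Fin n₀, ∀ t : ℝ, 0 < t →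
        μ (⋃ j : Fin n₀, ⋃ (_ : (j : ℕ) < (i : ℕ)), Function.support (f j)) ≤ distFun μ (f i) t ∨
        distFun μ (f i) t = 0) →
      (C : ℝ≥0∞)⁻¹ * (∑ i : Fin n₀, lorentzNorm μ p (ENNReal.ofReal q) (f i) ^ q) ^ (1 / q) ≤
          lorentzNorm μ p (ENNReal.ofReal q) (fun x => ∑ i : Fin n₀, f i x) ∧
        lorentzNorm μ p (ENNReal.ofReal q) (fun x => ∑ i : Fin n₀, f i x) ≤
          C * (∑ i : Fin n₀, lorentzNorm μ p (ENNReal.ofReal q) (f i) ^ q) ^ (1 / q) := by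
  have hq0 : (0:ℝ) < q := lt_of_lt_of_le one_pos hq
  have hp0 : (0:ℝ) < p := lt_trans one_pos hp
  set r : ℝ := 1 / p * q with hrdef
  have hr : 0 < r := mul_pos (one_div_pos.2 hp0) hq0
  -- facts about the constants
  have h2top : (2:ℝ≥0∞) ^ r ≠ ⊤ := ENNReal.rpow_ne_top_of_nonneg hr.le (by norm_num)
  have h12 : (1:ℝ≥0∞) < 2 ^ r := by
    calc (1:ℝ≥0∞) = 2 ^ (0:ℝ) := by simp
    _ < 2 ^ r := ENNReal.rpow_lt_rpow_of_exponent_lt one_lt_two ENNReal.ofNat_ne_top hr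
  have hsub0 : (2:ℝ≥0∞) ^ r - 1 ≠ 0 := by
    rw [Ne, tsub_eq_zero_iff_le]
    exact not_le.2 h12
  have hsubtop : (2:ℝ≥0∞) ^ r - 1 ≠ ⊤ := ne_top_of_le_ne_top h2top tsub_le_self
  set c1 : ℝ≥0∞ := ((2:ℝ≥0∞) ^ r - 1)⁻¹ * 2 ^ r with hc1def
  have hc1top : c1 ≠ ⊤ := ENNReal.mul_ne_top (ENNReal.inv_ne_top.2 hsub0) h2top
  have hc1ge1 : (1:ℝ≥0∞) ≤ c1 := by
    calc (1:ℝ≥0∞) = ((2:ℝ≥0∞) ^ r - 1)⁻¹ * ((2:ℝ≥0∞) ^ r - 1) :=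
          (ENNReal.inv_mul_cancel hsub0 hsubtop).symm
      _ ≤ c1 := mul_le_mul_right tsub_le_self _
  refine ⟨c1.toNNReal + ((2:ℝ≥0∞) ^ r).toNNReal + 1,
    lt_of_lt_of_le zero_lt_one le_add_self, ?_⟩
  set C : ℝ≥0 := c1.toNNReal + ((2:ℝ≥0∞) ^ r).toNNReal + 1 with hCdef
  have hCcoe : (C:ℝ≥0∞) = c1 + 2 ^ r + 1 := by
    rw [hCdef]
    push_cast
    rw [ENNReal.coe_toNNReal hc1top, ENNReal.coe_toNNReal h2top]
  have hCc1 : c1 ≤ (C:ℝ≥0∞) := by rw [hCcoe, add_assoc]; exact le_self_add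
  have hCc2 : (2:ℝ≥0∞) ^ r ≤ (C:ℝ≥0∞) := by
    rw [hCcoe]
    have h1 : (2:ℝ≥0∞) ^ r ≤ c1 + 2 ^ r := le_add_self
    exact h1.trans le_self_add
  have hCne0 : (C:ℝ≥0∞) ≠ 0 := by
    rw [hCcoe]
    simp
  have hCC : (C:ℝ≥0∞)⁻¹ * C = 1 := ENNReal.inv_mul_cancel hCne0 ENNReal.coe_ne_top
  intro X mX μ n₀ f hf hdisj hdom
  -- measurability and disjointness of the superlevel sets
  have hEmeas : ∀ (i : Fin n₀) (t : ℝ), MeasurableSet {x | t ≤ |f i x|} :=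
    fun i t => measurableSet_le measurable_const (hf i).abs
  have hEsub : ∀ (i : Fin n₀) (t : ℝ), 0 < t → {x | t ≤ |f i x|} ⊆ Function.support (f i) := by
    intro i t ht x hx
    exact abs_pos.1 (lt_of_lt_of_le ht hx)
  have hsingle : ∀ (x : X) (i : Fin n₀), f i x ≠ 0 → ∑ j : Fin n₀, f j x = f i x := by
    intro x i hi
    refine Finset.sum_eq_single i (fun j _ hj => ?_) (fun h => absurd (Finset.mem_univ i) h)
    by_contra hjx
    exact Set.disjoint_left.1 (hdisj hj) hjx (by simpa [Function.mem_support] using hi)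
  -- the distribution function of the sum
  have hdistsum : ∀ t : ℝ, 0 < t →
      distFun μ (fun x => ∑ i : Fin n₀, f i x) t = ∑ i : Fin n₀, distFun μ (f i) t := by
    intro t ht
    have hset : {x | t ≤ |∑ i : Fin n₀, f i x|} = ⋃ i, {x | t ≤ |f i x|} := by
      ext x
      simp only [mem_setOf_eq, mem_iUnion]
      constructor
      · intro hx
        have hne : ∑ i : Fin n₀, f i x ≠ 0 := by
          intro h0; rw [h0, abs_zero] at hx; exact absurd hx (not_le.2 ht)
        obtain ⟨i, _, hi⟩ := Finset.exists_ne_zero_of_sum_ne_zero hne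
        exact ⟨i, by rwa [hsingle x i hi] at hx⟩
      · rintro ⟨i, hi⟩
        have hne : f i x ≠ 0 := abs_pos.1 (lt_of_lt_of_le ht hi)
        rwa [hsingle x i hne]
    rw [distFun, hset, measure_iUnion ?_ (fun i => hEmeas i t), tsum_fintype]
    · rfl
    · intro i j hij
      exact (hdisj hij).mono (hEsub i t ht) (hEsub j t ht)
  -- translation of the domination hypothesis
  have hhyp : ∀ t : ℝ, 0 < t → ∀ i : Fin n₀,
      (∑ j ∈ Finset.univ.filter (fun j : Fin n₀ => (j : ℕ) < (i : ℕ)), distFun μ (f j) t)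
        ≤ distFun μ (f i) t ∨ distFun μ (f i) t = 0 := by
    intro t ht i
    rcases hdom i t ht with hle | h0
    · left
      refine le_trans ?_ hle
      rw [show (∑ j ∈ Finset.univ.filter (fun j : Fin n₀ => (j : ℕ) < (i : ℕ)),
          distFun μ (f j) t) = μ (⋃ j ∈ Finset.univ.filter
            (fun j : Fin n₀ => (j : ℕ) < (i : ℕ)), {x | t ≤ |f j x|}) from
        (measure_biUnion_finset (fun a _ b _ hab =>
          (hdisj hab).mono (hEsub a t ht) (hEsub b t ht)) (fun b _ => hEmeas b t)).symm]
      refine measure_mono ?_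
      intro x hx
      rw [mem_iUnion₂] at hx ⊢
      obtain ⟨j, hj, hxj⟩ := hx
      exact ⟨j, by simpa using hj, hEsub j t ht hxj⟩
    · exact Or.inr h0
  -- the integral functional
  set I : (X → ℝ) → ℝ≥0∞ := fun g => ∫⁻ t in Ioi (0:ℝ),
    (ENNReal.ofReal t * distFun μ g t ^ (1 / p)) ^ q / ENNReal.ofReal t with hIdef
  have hlorentz : ∀ g : X → ℝ, lorentzNorm μ p (ENNReal.ofReal q) g =
      ENNReal.ofReal p ^ (1 / q) * (I g) ^ (1 / q) := by
    intro g
    rw [lorentzNorm, if_neg ENNReal.ofReal_ne_top, ENNReal.toReal_ofReal hq0.le]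
  have hmeas : ∀ g : X → ℝ, Measurable fun t : ℝ =>
      (ENNReal.ofReal t * distFun μ g t ^ (1 / p)) ^ q / ENNReal.ofReal t := by
    intro g
    have hD : Measurable fun t : ℝ => distFun μ g t :=
      Antitone.measurable (fun s t hst => measure_mono (fun x hx => le_trans hst hx))
    fun_prop
  have expand : ∀ (D : ℝ≥0∞) (t : ℝ),
      (ENNReal.ofReal t * D ^ (1 / p)) ^ q / ENNReal.ofReal t =
        (ENNReal.ofReal t) ^ q / ENNReal.ofReal t * D ^ r := by
    intro D t
    rw [hrdef, ENNReal.mul_rpow_of_nonneg _ _ hq0.le, ← ENNReal.rpow_mul, div_eq_mul_inv,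
      div_eq_mul_inv, div_eq_mul_inv]
    ring
  -- pointwise bounds on the integrands
  have hup_pt : ∀ t ∈ Ioi (0:ℝ),
      (ENNReal.ofReal t * distFun μ (fun x => ∑ i : Fin n₀, f i x) t ^ (1 / p)) ^ q /
          ENNReal.ofReal t ≤
        2 ^ r * ∑ i : Fin n₀,
          (ENNReal.ofReal t * distFun μ (f i) t ^ (1 / p)) ^ q / ENNReal.ofReal t := by
    intro t ht
    rw [mem_Ioi] at ht
    have hfin := fin_pointwise r hr n₀ (fun i => distFun μ (f i) t) (hhyp t ht)
    calc (ENNReal.ofReal t * distFun μ (fun x => ∑ i : Fin n₀, f i x) t ^ (1 / p)) ^ q /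
          ENNReal.ofReal t
        = (ENNReal.ofReal t) ^ q / ENNReal.ofReal t *
            (∑ i : Fin n₀, distFun μ (f i) t) ^ r := by
          rw [hdistsum t ht, expand]
      _ ≤ (ENNReal.ofReal t) ^ q / ENNReal.ofReal t *
            (2 ^ r * ∑ i : Fin n₀, distFun μ (f i) t ^ r) := mul_le_mul_right hfin.1 _
      _ = 2 ^ r * ∑ i : Fin n₀,
            (ENNReal.ofReal t) ^ q / ENNReal.ofReal t * distFun μ (f i) t ^ r := by
          rw [← Finset.mul_sum]
          ring
      _ = 2 ^ r * ∑ i : Fin n₀,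
            (ENNReal.ofReal t * distFun μ (f i) t ^ (1 / p)) ^ q / ENNReal.ofReal t := by
          congr 1
          exact Finset.sum_congr rfl (fun i _ => (expand _ t).symm)
  have hdown_pt : ∀ t ∈ Ioi (0:ℝ),
      ((2:ℝ≥0∞) ^ r - 1) * ∑ i : Fin n₀,
          (ENNReal.ofReal t * distFun μ (f i) t ^ (1 / p)) ^ q / ENNReal.ofReal t ≤
        2 ^ r * ((ENNReal.ofReal t * distFun μ (fun x => ∑ i : Fin n₀, f i x) t ^ (1 / p)) ^ q /
          ENNReal.ofReal t) := by
    intro t ht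
    rw [mem_Ioi] at ht
    have hfin := fin_pointwise r hr n₀ (fun i => distFun μ (f i) t) (hhyp t ht)
    calc ((2:ℝ≥0∞) ^ r - 1) * ∑ i : Fin n₀,
          (ENNReal.ofReal t * distFun μ (f i) t ^ (1 / p)) ^ q / ENNReal.ofReal t
        = ((2:ℝ≥0∞) ^ r - 1) * ∑ i : Fin n₀,
            (ENNReal.ofReal t) ^ q / ENNReal.ofReal t * distFun μ (f i) t ^ r := by
          congr 1
          exact Finset.sum_congr rfl (fun i _ => expand _ t)
      _ = (ENNReal.ofReal t) ^ q / ENNReal.ofReal t *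
            (((2:ℝ≥0∞) ^ r - 1) * ∑ i : Fin n₀, distFun μ (f i) t ^ r) := by
          rw [← Finset.mul_sum]
          ring
      _ ≤ (ENNReal.ofReal t) ^ q / ENNReal.ofReal t *
            (2 ^ r * (∑ i : Fin n₀, distFun μ (f i) t) ^ r) := mul_le_mul_right hfin.2 _
      _ = 2 ^ r * ((ENNReal.ofReal t * distFun μ (fun x => ∑ i : Fin n₀, f i x) t ^ (1 / p)) ^ q /
            ENNReal.ofReal t) := by
          rw [hdistsum t ht, expand]
          ring
  -- integral bounds
  have hIF_le : I (fun x => ∑ i : Fin n₀, f i x) ≤ 2 ^ r * ∑ i : Fin n₀, I (f i) := by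
    calc I (fun x => ∑ i : Fin n₀, f i x)
        ≤ ∫⁻ t in Ioi (0:ℝ), 2 ^ r * ∑ i : Fin n₀,
            (ENNReal.ofReal t * distFun μ (f i) t ^ (1 / p)) ^ q / ENNReal.ofReal t :=
          setLIntegral_mono (((Finset.univ.measurable_sum
            (fun i _ => hmeas (f i))).const_mul _)) hup_pt
      _ = 2 ^ r * ∑ i : Fin n₀, I (f i) := by
          rw [lintegral_const_mul' _ _ h2top,
            lintegral_finset_sum' _ (fun i _ => (hmeas (f i)).aemeasurable)]
  have hsum_le : ∑ i : Fin n₀, I (f i) ≤ c1 * I (fun x => ∑ i : Fin n₀, f i x) := by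
    have h1 : ((2:ℝ≥0∞) ^ r - 1) * ∑ i : Fin n₀, I (f i) ≤
        2 ^ r * I (fun x => ∑ i : Fin n₀, f i x) := by
      calc ((2:ℝ≥0∞) ^ r - 1) * ∑ i : Fin n₀, I (f i)
          = ∫⁻ t in Ioi (0:ℝ), ((2:ℝ≥0∞) ^ r - 1) * ∑ i : Fin n₀,
              (ENNReal.ofReal t * distFun μ (f i) t ^ (1 / p)) ^ q / ENNReal.ofReal t := by
            rw [lintegral_const_mul' _ _ hsubtop,
              lintegral_finset_sum' _ (fun i _ => (hmeas (f i)).aemeasurable)]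
        _ ≤ ∫⁻ t in Ioi (0:ℝ), 2 ^ r *
              ((ENNReal.ofReal t * distFun μ (fun x => ∑ i : Fin n₀, f i x) t ^ (1 / p)) ^ q /
                ENNReal.ofReal t) :=
            setLIntegral_mono ((hmeas _).const_mul _) hdown_pt
        _ = 2 ^ r * I (fun x => ∑ i : Fin n₀, f i x) := lintegral_const_mul' _ _ h2top
    calc ∑ i : Fin n₀, I (f i)
        = ((2:ℝ≥0∞) ^ r - 1)⁻¹ * (((2:ℝ≥0∞) ^ r - 1) * ∑ i : Fin n₀, I (f i)) := by
          rw [← mul_assoc, ENNReal.inv_mul_cancel hsub0 hsubtop, one_mul]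
      _ ≤ ((2:ℝ≥0∞) ^ r - 1)⁻¹ * (2 ^ r * I (fun x => ∑ i : Fin n₀, f i x)) :=
          mul_le_mul_right h1 _
      _ = c1 * I (fun x => ∑ i : Fin n₀, f i x) := by rw [hc1def, mul_assoc]
  -- relating the Lorentz norms to `I`
  have hNq : ∀ g : X → ℝ, lorentzNorm μ p (ENNReal.ofReal q) g ^ q = ENNReal.ofReal p * I g := by
    intro g
    rw [hlorentz g, ENNReal.mul_rpow_of_nonneg _ _ hq0.le, ← ENNReal.rpow_mul,
      ← ENNReal.rpow_mul, one_div_mul_cancel hq0.ne', ENNReal.rpow_one, ENNReal.rpow_one]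
  have hNsum : (∑ i : Fin n₀, lorentzNorm μ p (ENNReal.ofReal q) (f i) ^ q) ^ (1 / q) =
      ENNReal.ofReal p ^ (1 / q) * (∑ i : Fin n₀, I (f i)) ^ (1 / q) := by
    rw [Finset.sum_congr rfl (fun i _ => hNq (f i)), ← Finset.mul_sum,
      ENNReal.mul_rpow_of_nonneg _ _ (by positivity : (0:ℝ) ≤ 1 / q)]
  have hq1 : 1 / q ≤ 1 := by rw [div_le_one hq0]; exact hq
  have hqnn : (0:ℝ) ≤ 1 / q := by positivity
  constructor
  · -- lower bound
    rw [hlorentz (fun x => ∑ i : Fin n₀, f i x), hNsum]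
    have hc1C : c1 ^ (1 / q) ≤ (C:ℝ≥0∞) := by
      have h := ENNReal.rpow_le_rpow_of_exponent_le hc1ge1 hq1
      rw [ENNReal.rpow_one] at h
      exact h.trans hCc1
    have step1 : (∑ i : Fin n₀, I (f i)) ^ (1 / q) ≤
        c1 ^ (1 / q) * (I (fun x => ∑ i : Fin n₀, f i x)) ^ (1 / q) := by
      rw [← ENNReal.mul_rpow_of_nonneg _ _ hqnn]
      exact ENNReal.rpow_le_rpow hsum_le hqnn
    calc (C:ℝ≥0∞)⁻¹ * (ENNReal.ofReal p ^ (1 / q) * (∑ i : Fin n₀, I (f i)) ^ (1 / q))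
        ≤ (C:ℝ≥0∞)⁻¹ * (ENNReal.ofReal p ^ (1 / q) *
            (c1 ^ (1 / q) * (I (fun x => ∑ i : Fin n₀, f i x)) ^ (1 / q))) :=
          mul_le_mul_right (mul_le_mul_right step1 _) _
      _ ≤ (C:ℝ≥0∞)⁻¹ * (ENNReal.ofReal p ^ (1 / q) *
            ((C:ℝ≥0∞) * (I (fun x => ∑ i : Fin n₀, f i x)) ^ (1 / q))) :=
          mul_le_mul_right (mul_le_mul_right (mul_le_mul_left hc1C _) _) _
      _ = ((C:ℝ≥0∞)⁻¹ * (C:ℝ≥0∞)) * (ENNReal.ofReal p ^ (1 / q) *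
            (I (fun x => ∑ i : Fin n₀, f i x)) ^ (1 / q)) := by ring
      _ = 1 * (ENNReal.ofReal p ^ (1 / q) *
            (I (fun x => ∑ i : Fin n₀, f i x)) ^ (1 / q)) := by rw [hCC]
      _ = ENNReal.ofReal p ^ (1 / q) * (I (fun x => ∑ i : Fin n₀, f i x)) ^ (1 / q) :=
          one_mul _
  · -- upper bound
    rw [hlorentz (fun x => ∑ i : Fin n₀, f i x), hNsum]
    have step2 : ((2:ℝ≥0∞) ^ r * ∑ i : Fin n₀, I (f i)) ^ (1 / q) ≤
        (C:ℝ≥0∞) * (∑ i : Fin n₀, I (f i)) ^ (1 / q) := by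
      rw [ENNReal.mul_rpow_of_nonneg _ _ hqnn]
      refine mul_le_mul_left ?_ _
      have h := ENNReal.rpow_le_rpow_of_exponent_le h12.le hq1
      rw [ENNReal.rpow_one] at h
      exact h.trans hCc2
    calc ENNReal.ofReal p ^ (1 / q) * (I (fun x => ∑ i : Fin n₀, f i x)) ^ (1 / q)
        ≤ ENNReal.ofReal p ^ (1 / q) * ((2:ℝ≥0∞) ^ r * ∑ i : Fin n₀, I (f i)) ^ (1 / q) :=
          mul_le_mul_right (ENNReal.rpow_le_rpow hIF_le hqnn) _
      _ ≤ ENNReal.ofReal p ^ (1 / q) * ((C:ℝ≥0∞) * (∑ i : Fin n₀, I (f i)) ^ (1 / q)) :=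
          mul_le_mul_right step2 _
      _ = (C:ℝ≥0∞) * (ENNReal.ofReal p ^ (1 / q) * (∑ i : Fin n₀, I (f i)) ^ (1 / q)) := by
          ring
end

section
/- Let (X, μ) be a measure space, p ∈ (1,∞), and let f₁,…,f_{n₀} be measurable functions with pairwise disjoint supports A₁,…,A_{n₀} such that for each n ≥ 2 and t > 0 either d_{f_n}(t) ≥ μ(A₁ ∪ ⋯ ∪ A_{n−1}) or d_{f_n}(t) = 0. Then there is a constant C₁ = C₁(p), independent of X, n₀, and the functions, such that (1/C₁)·max_{1≤n≤n₀} ‖f_n‖_{p,∞} ≤ ‖∑_{n=1}^{n₀} f_n‖_{p,∞} ≤ C₁·max_{1≤n≤n₀} ‖f_n‖_{p,∞}. -/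
open MeasureTheory ENNReal NNReal Set Filter

/-!
On the support of `f i` the sum `∑ j, f j` equals `f i`, so the level set `{t ≤ |∑ j, f j|}` is
the disjoint union of the level sets of the `f i`. This gives `d_{f_i} ≤ d_{∑ f}` at once. For
the reverse bound fix `t > 0` and let `m` be the last index with `d_{f_m}(t) ≠ 0`: the level sets
of later functions are null, those of earlier ones lie in `A₁ ∪ ⋯ ∪ A_{m-1}`, whose measure is at
most `d_{f_m}(t)` by hypothesis. Hence `d_{∑ f}(t) ≤ 2 d_{f_m}(t)`, and `C₁ = 2 ≥ 2^{1/p}` works.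
-/

theorem ENNReal.iSup_rpow {ι : Sort*} (g : ι → ℝ≥0∞) {r : ℝ} (hr : 0 < r) :
    (⨆ i, g i) ^ r = ⨆ i, g i ^ r :=
  Monotone.map_iSup_of_continuousAt ENNReal.continuous_rpow_const.continuousAt
    (ENNReal.monotone_rpow_of_nonneg hr.le) (ENNReal.zero_rpow_of_pos hr)

theorem Finset.sum_eq_of_ne_zero_of_pairwise_disjoint_support {ι X M : Type*} [Fintype ι]
    [AddCommMonoid M] {f : ι → X → M}
    (hdisj : Pairwise (fun i j => Disjoint (Function.support (f i)) (Function.support (f j))))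
    {i : ι} {x : X} (hx : f i x ≠ 0) : ∑ j, f j x = f i x :=
  Finset.sum_eq_single_of_mem i (Finset.mem_univ i) fun _ _ hji =>
    Function.notMem_support.1 fun hjx => (hdisj hji).le_bot ⟨hjx, hx⟩

section LevelSets

variable {X : Type*} {t : ℝ}

theorem setOf_le_abs_subset_support {f : X → ℝ} (ht : 0 < t) :
    {x | t ≤ |f x|} ⊆ Function.support f := fun x hx h0 => by
  simp only [mem_ofPred_eq, h0, abs_zero] at hx
  linarith

theorem setOf_le_abs_sum_eq_iUnion {ι : Type*} [Fintype ι] {f : ι → X → ℝ}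
    (hdisj : Pairwise (fun i j => Disjoint (Function.support (f i)) (Function.support (f j))))
    (ht : 0 < t) : {x | t ≤ |∑ i, f i x|} = ⋃ i, {x | t ≤ |f i x|} := by
  ext x
  simp only [mem_ofPred_eq, mem_iUnion]
  constructor
  · intro hx
    obtain ⟨i, -, hi⟩ := Finset.exists_ne_zero_of_sum_ne_zero
      (setOf_le_abs_subset_support (f := fun x => ∑ i, f i x) ht hx)
    exact ⟨i, by rwa [Finset.sum_eq_of_ne_zero_of_pairwise_disjoint_support hdisj hi] at hx⟩
  · rintro ⟨i, hi⟩
    rwa [Finset.sum_eq_of_ne_zero_of_pairwise_disjoint_support hdisj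
      (setOf_le_abs_subset_support ht hi)]

end LevelSets

theorem measure_iUnion_le_two_mul {ι X : Type*} [LinearOrder ι] [Countable ι] [MeasurableSpace X]
    {μ : Measure X} {E F : ι → Set X} (hEF : ∀ i, E i ⊆ F i) (m : ι)
    (hnull : ∀ j, m < j → μ (E j) = 0) (hprev : μ (⋃ j, ⋃ (_ : j < m), F j) ≤ μ (E m)) :
    μ (⋃ i, E i) ≤ 2 * μ (E m) := by
  have hcover : ⋃ i, E i ⊆ (⋃ j, ⋃ (_ : j < m), F j) ∪ E m ∪ ⋃ j, ⋃ (_ : m < j), E j := by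
    refine iUnion_subset fun i x hx => ?_
    rcases lt_trichotomy i m with hlt | rfl | hgt
    · exact Or.inl (Or.inl (mem_biUnion hlt (hEF i hx)))
    · exact Or.inl (Or.inr hx)
    · exact Or.inr (mem_biUnion hgt hx)
  have hlater : μ (⋃ j, ⋃ (_ : m < j), E j) = 0 :=
    measure_iUnion_null fun j => measure_iUnion_null fun hj => hnull j hj
  calc μ (⋃ i, E i)
      ≤ μ (⋃ j, ⋃ (_ : j < m), F j) + μ (E m) + μ (⋃ j, ⋃ (_ : m < j), E j) :=
        (measure_mono hcover).trans <|
          (measure_union_le _ _).trans (add_le_add_left (measure_union_le _ _) _)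
    _ ≤ 2 * μ (E m) := by rw [hlater, add_zero, two_mul]; gcongr

section Distribution

variable {X : Type*} [MeasurableSpace X] {μ : Measure X} {ι : Type*} [Fintype ι]
  {f : ι → X → ℝ} {t : ℝ}

theorem distFun_le_distFun_sum
    (hdisj : Pairwise (fun i j => Disjoint (Function.support (f i)) (Function.support (f j))))
    (ht : 0 < t) (i : ι) : distFun μ (f i) t ≤ distFun μ (fun x => ∑ j, f j x) t :=
  measure_mono <| (setOf_le_abs_sum_eq_iUnion hdisj ht).symm ▸
    subset_iUnion (fun j => {x | t ≤ |f j x|}) i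

theorem distFun_sum_le_two_mul_iSup [LinearOrder ι]
    (hdisj : Pairwise (fun i j => Disjoint (Function.support (f i)) (Function.support (f j))))
    (hdom : ∀ i, μ (⋃ j, ⋃ (_ : j < i), Function.support (f j)) ≤ distFun μ (f i) t ∨
      distFun μ (f i) t = 0)
    (ht : 0 < t) : distFun μ (fun x => ∑ i, f i x) t ≤ 2 * ⨆ i, distFun μ (f i) t := by
  rw [distFun, setOf_le_abs_sum_eq_iUnion hdisj ht]
  by_cases hzero : ∀ i, distFun μ (f i) t = 0
  · rw [measure_iUnion_null hzero]
    exact zero_le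
  obtain ⟨i₀, hi₀⟩ := not_forall.1 hzero
  obtain ⟨m, hm, hlast⟩ := (Finset.univ.filter fun i => distFun μ (f i) t ≠ 0).exists_max_image
    id ⟨i₀, by simpa using hi₀⟩
  simp only [Finset.mem_filter, Finset.mem_univ, true_and, id] at hm hlast
  calc μ (⋃ i, {x | t ≤ |f i x|})
      ≤ 2 * distFun μ (f m) t :=
        measure_iUnion_le_two_mul (fun i => setOf_le_abs_subset_support ht) m
          (fun j hj => by_contra fun hj0 => (hlast j hj0).not_gt hj) ((hdom m).resolve_right hm)
    _ ≤ 2 * ⨆ i, distFun μ (f i) t := by gcongr; exact le_iSup (fun i => distFun μ (f i) t) m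

end Distribution

section WeakNorm

variable {X : Type*} [MeasurableSpace X] {μ : Measure X} {p : ℝ}

theorem lorentzNorm_top_eq (f : X → ℝ) :
    lorentzNorm μ p ⊤ f = ⨆ t ∈ Ioi (0 : ℝ), ENNReal.ofReal t * distFun μ f t ^ (1 / p) :=
  if_pos rfl

theorem le_lorentzNorm_top (f : X → ℝ) {t : ℝ} (ht : 0 < t) :
    ENNReal.ofReal t * distFun μ f t ^ (1 / p) ≤ lorentzNorm μ p ⊤ f := by
  rw [lorentzNorm_top_eq]
  exact le_iSup₂ (f := fun t (_ : t ∈ Ioi (0 : ℝ)) => ENNReal.ofReal t * distFun μ f t ^ (1 / p))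
    t ht

theorem lorentzNorm_top_mono (hp : 0 ≤ p) {f g : X → ℝ}
    (h : ∀ t, 0 < t → distFun μ f t ≤ distFun μ g t) :
    lorentzNorm μ p ⊤ f ≤ lorentzNorm μ p ⊤ g := by
  rw [lorentzNorm_top_eq]
  refine iSup₂_le fun t ht => (le_lorentzNorm_top g ht).trans' ?_
  gcongr
  exact h t ht

theorem lorentzNorm_top_le_rpow_mul_iSup (hp : 0 < p) {ι : Type*} {f : X → ℝ} {g : ι → X → ℝ}
    (c : ℝ≥0∞) (h : ∀ t, 0 < t → distFun μ f t ≤ c * ⨆ i, distFun μ (g i) t) :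
    lorentzNorm μ p ⊤ f ≤ c ^ (1 / p) * ⨆ i, lorentzNorm μ p ⊤ (g i) := by
  have hp' : 0 < 1 / p := one_div_pos.2 hp
  rw [lorentzNorm_top_eq]
  refine iSup₂_le fun t ht => ?_
  calc ENNReal.ofReal t * distFun μ f t ^ (1 / p)
      ≤ ENNReal.ofReal t * (c * ⨆ i, distFun μ (g i) t) ^ (1 / p) := by gcongr; exact h t ht
    _ = c ^ (1 / p) * ⨆ i, ENNReal.ofReal t * distFun μ (g i) t ^ (1 / p) := by
        rw [ENNReal.mul_rpow_of_nonneg _ _ hp'.le, ENNReal.iSup_rpow _ hp', mul_left_comm,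
          ENNReal.mul_iSup]
    _ ≤ c ^ (1 / p) * ⨆ i, lorentzNorm μ p ⊤ (g i) := by
        gcongr with i
        exact le_lorentzNorm_top (g i) ht

end WeakNorm

/-- Lemma 2.4 (case `q = ∞`): for functions with pairwise disjoint supports whose distribution
functions dominate the total measure of the preceding supports, the weak-`L^p` norm of the sum
is comparable to the maximum of the weak-`L^p` norms, with a constant `C₁(p)` independent of the
space, of `n₀`, and of the functions. -/
theorem lorentz_disjoint_sum_weak (p : ℝ) (hp : 1 < p) :
    ∃ C : ℝ≥0, 0 < C ∧ ∀ (X : Type) (_ : MeasurableSpace X) (μ : Measure X) (n₀ : ℕ)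
      (f : Fin n₀ → X → ℝ), (∀ i, Measurable (f i)) →
      Pairwise (fun i j => Disjoint (Function.support (f i)) (Function.support (f j))) →
      (∀ i : Fin n₀, ∀ t : ℝ, 0 < t →
        μ (⋃ j : Fin n₀, ⋃ (_ : (j : ℕ) < (i : ℕ)), Function.support (f j)) ≤ distFun μ (f i) t ∨
        distFun μ (f i) t = 0) →
      (C : ℝ≥0∞)⁻¹ * (⨆ i : Fin n₀, lorentzNorm μ p ⊤ (f i)) ≤
          lorentzNorm μ p ⊤ (fun x => ∑ i : Fin n₀, f i x) ∧
        lorentzNorm μ p ⊤ (fun x => ∑ i : Fin n₀, f i x) ≤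
          C * ⨆ i : Fin n₀, lorentzNorm μ p ⊤ (f i) := by
  refine ⟨2, two_pos, fun X _ μ n₀ f _ hdisj hdom => ⟨?_, ?_⟩⟩
  · calc ((2 : ℝ≥0) : ℝ≥0∞)⁻¹ * ⨆ i, lorentzNorm μ p ⊤ (f i)
        ≤ ⨆ i, lorentzNorm μ p ⊤ (f i) :=
          mul_le_of_le_one_left' (ENNReal.inv_le_one.2 (by norm_num))
      _ ≤ lorentzNorm μ p ⊤ (fun x => ∑ i, f i x) :=
          iSup_le fun i => lorentzNorm_top_mono (by linarith) fun t ht =>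
            distFun_le_distFun_sum hdisj ht i
  · have htwo : (2 : ℝ≥0∞) ^ (1 / p) ≤ 2 := by
      simpa using ENNReal.rpow_le_rpow_of_exponent_le (x := 2) one_le_two
        ((div_le_one (by linarith)).2 hp.le)
    calc lorentzNorm μ p ⊤ (fun x => ∑ i, f i x)
        ≤ 2 ^ (1 / p) * ⨆ i, lorentzNorm μ p ⊤ (f i) :=
          lorentzNorm_top_le_rpow_mul_iSup (by linarith) 2 fun t ht =>
            distFun_sum_le_two_mul_iSup hdisj (fun i => hdom i t ht) ht
      _ ≤ ((2 : ℝ≥0) : ℝ≥0∞) * ⨆ i, lorentzNorm μ p ⊤ (f i) := by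
          rw [ENNReal.coe_ofNat]; gcongr
end

section
/- Fix p ∈ (1,∞) and 1 ≤ r < q < ∞. Let (X,μ) be a measure space admitting a sequence of pairwise disjoint measurable sets E₁, E₂, … with 0 < μ(E_n) < ∞ and μ(E_n) ≥ μ(E₁ ∪ ⋯ ∪ E_{n−1}) for each n ≥ 2. For n₀ ∈ ℕ define g_{n₀} = ∑_{n=1}^{n₀} n^{−2/(q+r)} μ(E_n)^{−1/p} χ_{E_n}. Then ‖g_{n₀}‖_{p,r} / ‖g_{n₀}‖_{p,q} → ∞ as n₀ → ∞. -/
/-!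
Write `τₙ = μ(Eₙ)` and `cₙ = (n+1)^(-2/(q+r)) τₙ^(-1/p)`. For `t > 0` the distribution function
of `g_{n₀}` is the sum of the `τₙ` over those `n < n₀` with `t ≤ cₙ`. The growth condition
`τₙ ≥ τ₀ + ⋯ + τₙ₋₁` makes every such sum comparable to its largest term, hence `(∑ τₙ)^a` to
`∑ τₙ^a` for each `a > 0`, with constants depending only on `a`. Integrating in `t`, the `s`-th
power of `‖g_{n₀}‖_{p,s}` is therefore comparable to
`∑_{n<n₀} τₙ^(s/p) cₙ^s / s = ∑_{n<n₀} (n+1)^(-2s/(q+r)) / s`,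
a series that converges for `s = q` and diverges for `s = r`.
-/

open MeasureTheory ENNReal NNReal Set Filter

open Topology

def Superincreasing (x : ℕ → ℝ≥0∞) : Prop :=
  ∀ n, ∑ k ∈ Finset.range n, x k ≤ x n

namespace Superincreasing

open Finset

variable {x : ℕ → ℝ≥0∞}

theorem sum_le_two_mul (hx : Superincreasing x) {s : Finset ℕ} {m : ℕ}
    (hs : ∀ k ∈ s, k ≤ m) : ∑ k ∈ s, x k ≤ 2 * x m :=
  calc ∑ k ∈ s, x k ≤ ∑ k ∈ range (m + 1), x k :=
        sum_le_sum_of_subset fun k hk => mem_range.2 (Nat.lt_succ_of_le (hs k hk))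
    _ = ∑ k ∈ range m, x k + x m := sum_range_succ _ _
    _ ≤ x m + x m := by gcongr; exact hx m
    _ = 2 * x m := (two_mul _).symm

theorem rpow_sum_le {b : ℝ} (hx : Superincreasing x) (hb : 0 < b) (s : Finset ℕ) :
    (∑ k ∈ s, x k) ^ b ≤ 2 ^ b * ∑ k ∈ s, x k ^ b := by
  rcases s.eq_empty_or_nonempty with rfl | hs
  · simp [ENNReal.zero_rpow_of_pos hb]
  calc (∑ k ∈ s, x k) ^ b ≤ (2 * x (s.max' hs)) ^ b := by
        gcongr; exact hx.sum_le_two_mul fun k hk => s.le_max' k hk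
    _ = 2 ^ b * x (s.max' hs) ^ b := mul_rpow_of_nonneg _ _ hb.le
    _ ≤ 2 ^ b * ∑ k ∈ s, x k ^ b := by
        gcongr; exact single_le_sum (f := fun k => x k ^ b) (fun _ _ => zero_le) (s.max'_mem hs)

theorem one_sub_mul_sum_range_rpow_le {a : ℝ} (hx : Superincreasing x) (ha : 0 ≤ a) (n : ℕ) :
    (1 - 2 ^ (-a)) * ∑ k ∈ range n, x k ^ a ≤ (∑ k ∈ range n, x k) ^ a := by
  induction n with
  | zero => simp
  | succ n ih =>
    set S := ∑ k ∈ range n, x k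
    have hhalf : S ^ a ≤ 2 ^ (-a) * (S + x n) ^ a := by
      rw [ENNReal.rpow_neg, ← ENNReal.div_eq_inv_mul, ENNReal.le_div_iff_mul_le (by simp) (by simp),
        mul_comm, ← mul_rpow_of_nonneg _ _ ha, two_mul]
      gcongr; exact hx n
    have hle : (2 : ℝ≥0∞) ^ (-a) ≤ 1 := by
      simpa using ENNReal.rpow_le_rpow_of_exponent_le one_le_two (neg_nonpos.2 ha)
    calc (1 - 2 ^ (-a)) * ∑ k ∈ range (n + 1), x k ^ a
        = (1 - 2 ^ (-a)) * ∑ k ∈ range n, x k ^ a + (1 - 2 ^ (-a)) * x n ^ a := by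
          rw [sum_range_succ, mul_add]
      _ ≤ 2 ^ (-a) * (S + x n) ^ a + (1 - 2 ^ (-a)) * (S + x n) ^ a := by
          gcongr ?_ + _ * ?_
          · exact ih.trans hhalf
          · exact ENNReal.rpow_le_rpow le_add_self ha
      _ = (∑ k ∈ range (n + 1), x k) ^ a := by
          rw [← add_mul, add_tsub_cancel_of_le hle, one_mul, sum_range_succ]

theorem one_sub_mul_sum_rpow_le {a : ℝ} (hx : Superincreasing x) (ha : 0 ≤ a) (s : Finset ℕ) :
    (1 - 2 ^ (-a)) * ∑ k ∈ s, x k ^ a ≤ 2 ^ a * (∑ k ∈ s, x k) ^ a := by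
  rcases s.eq_empty_or_nonempty with rfl | hs
  · simp
  set m := s.max' hs
  have hsub : s ⊆ range (m + 1) := fun k hk => mem_range.2 (Nat.lt_succ_of_le (s.le_max' k hk))
  calc (1 - 2 ^ (-a)) * ∑ k ∈ s, x k ^ a ≤ (1 - 2 ^ (-a)) * ∑ k ∈ range (m + 1), x k ^ a := by
        gcongr
    _ ≤ (∑ k ∈ range (m + 1), x k) ^ a := hx.one_sub_mul_sum_range_rpow_le ha _
    _ ≤ (2 * x m) ^ a := by
        gcongr; exact hx.sum_le_two_mul fun k hk => Nat.le_of_lt_succ (mem_range.1 hk)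
    _ = 2 ^ a * x m ^ a := mul_rpow_of_nonneg _ _ ha
    _ ≤ 2 ^ a * (∑ k ∈ s, x k) ^ a := by
        gcongr; exact single_le_sum (f := x) (fun _ _ => zero_le) (s.max'_mem hs)

end Superincreasing

theorem distFun_sum_indicator {X ι : Type*} [MeasurableSpace X] (μ : Measure X) {E : ι → Set X}
    (hmeas : ∀ i, MeasurableSet (E i)) (hdisj : Pairwise (Function.onFun Disjoint E))
    (s : Finset ι) (c : ι → ℝ) {t : ℝ} (ht : 0 < t) :
    distFun μ (fun x => ∑ i ∈ s, (E i).indicator (fun _ => c i) x) t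
      = ∑ i ∈ s with t ≤ |c i|, μ (E i) := by
  have hset : {x | t ≤ |∑ i ∈ s, (E i).indicator (fun _ => c i) x|}
      = ⋃ i ∈ s.filter (fun i => t ≤ |c i|), E i := by
    ext x
    simp only [mem_ofPred_eq, mem_iUnion, Finset.mem_filter, exists_prop]
    by_cases hx : ∃ i ∈ s, x ∈ E i
    · obtain ⟨i, hi, hxi⟩ := hx
      have hval : ∑ j ∈ s, (E j).indicator (fun _ => c j) x = c i := by
        refine (Finset.sum_eq_single_of_mem i hi fun j _ hji => ?_).trans (indicator_of_mem hxi _)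
        exact indicator_of_notMem (disjoint_left.1 (hdisj hji).symm hxi) _
      rw [hval]
      refine ⟨fun h => ⟨i, ⟨hi, h⟩, hxi⟩, fun ⟨j, ⟨_, htj⟩, hxj⟩ => ?_⟩
      obtain rfl : j = i := by
        by_contra hji
        exact disjoint_left.1 (hdisj hji) hxj hxi
      exact htj
    · push Not at hx
      rw [Finset.sum_eq_zero fun i hi => indicator_of_notMem (hx i hi) _, abs_zero]
      exact iff_of_false ht.not_ge fun ⟨i, ⟨hi, _⟩, hxi⟩ => hx i hi hxi
  rw [distFun, hset, measure_biUnion_finset (hdisj.set_pairwise _) fun i _ => hmeas i]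

theorem lorentzNorm_ofReal_eq {X : Type*} [MeasurableSpace X] (μ : Measure X) (p : ℝ) {s : ℝ}
    (hs : 0 < s) (f : X → ℝ) :
    lorentzNorm μ p (ENNReal.ofReal s) f = ENNReal.ofReal p ^ (1 / s) *
      (∫⁻ t in Ioi 0, ENNReal.ofReal t ^ (s - 1) * distFun μ f t ^ (s / p)) ^ (1 / s) := by
  rw [lorentzNorm, if_neg ofReal_ne_top, toReal_ofReal hs.le]
  congr 2
  refine setLIntegral_congr_fun measurableSet_Ioi fun t ht => ?_
  have ht0 : ENNReal.ofReal t ≠ 0 := (ENNReal.ofReal_pos.2 ht).ne'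
  rw [mul_rpow_of_nonneg _ _ hs.le, ← ENNReal.rpow_mul, ENNReal.mul_div_right_comm,
    ENNReal.rpow_sub _ _ ht0 ofReal_ne_top, ENNReal.rpow_one, one_div_mul_eq_div]

theorem lintegral_Ioc_zero_rpow_sub_one {a s : ℝ} (ha : 0 ≤ a) (hs : 0 < s) :
    ∫⁻ t in Ioc 0 a, ENNReal.ofReal t ^ (s - 1) = ENNReal.ofReal (a ^ s / s) := by
  have hint : IntegrableOn (fun t => t ^ (s - 1)) (Ioc 0 a) := by
    rw [← intervalIntegrable_iff_integrableOn_Ioc_of_le ha]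
    exact intervalIntegral.intervalIntegrable_rpow' (by linarith)
  rw [setLIntegral_congr_fun measurableSet_Ioc fun t ht => ENNReal.ofReal_rpow_of_pos ht.1,
    ← ofReal_integral_eq_lintegral_ofReal hint
      (ae_restrict_of_forall_mem measurableSet_Ioc fun t ht => Real.rpow_nonneg ht.1.le _),
    ← intervalIntegral.integral_of_le ha, integral_rpow (Or.inl (by linarith)), sub_add_cancel,
    Real.zero_rpow hs.ne', sub_zero]

theorem setLIntegral_Ioi_rpow_sub_one_mul_sum_filter {ι : Type*} (F : Finset ι) {a : ι → ℝ}
    (ha : ∀ i, 0 ≤ a i) (y : ι → ℝ≥0∞) {s : ℝ} (hs : 0 < s) :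
    ∫⁻ t in Ioi 0, ENNReal.ofReal t ^ (s - 1) * ∑ i ∈ F with t ≤ a i, y i
      = ∑ i ∈ F, y i * ENNReal.ofReal (a i ^ s / s) := by
  have hind : ∀ t, ENNReal.ofReal t ^ (s - 1) * ∑ i ∈ F with t ≤ a i, y i
      = ∑ i ∈ F, (Iic (a i)).indicator (fun t => y i * ENNReal.ofReal t ^ (s - 1)) t := by
    intro t
    simp only [Finset.sum_filter, Finset.mul_sum, indicator_apply, mem_Iic]
    refine Finset.sum_congr rfl fun i _ => ?_
    split_ifs <;> simp [mul_comm]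
  simp_rw [hind]
  rw [lintegral_finsetSum _ fun i _ => (Measurable.indicator (by fun_prop) measurableSet_Iic)]
  refine Finset.sum_congr rfl fun i _ => ?_
  rw [setLIntegral_indicator measurableSet_Iic, Iic_inter_Ioi, lintegral_const_mul _ (by fun_prop),
    lintegral_Ioc_zero_rpow_sub_one (ha i) hs]

section StepFunction

variable {X : Type*} [MeasurableSpace X] {μ : Measure X} {E : ℕ → Set X}

theorem lorentzNorm_sum_indicator_le (hmeas : ∀ n, MeasurableSet (E n))
    (hdisj : Pairwise (Function.onFun Disjoint E)) (hx : Superincreasing fun n => μ (E n))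
    (F : Finset ℕ) (c : ℕ → ℝ) {p s : ℝ} (hp : 0 < p) (hs : 0 < s) :
    lorentzNorm μ p (ENNReal.ofReal s) (fun x => ∑ n ∈ F, (E n).indicator (fun _ => c n) x)
      ≤ ENNReal.ofReal p ^ (1 / s) *
        (2 ^ (s / p) * ∑ n ∈ F, μ (E n) ^ (s / p) * ENNReal.ofReal (|c n| ^ s / s)) ^ (1 / s) := by
  rw [lorentzNorm_ofReal_eq μ p hs]
  gcongr
  calc _ ≤ ∫⁻ t in Ioi 0, ENNReal.ofReal t ^ (s - 1) *
          ∑ n ∈ F with t ≤ |c n|, 2 ^ (s / p) * μ (E n) ^ (s / p) := by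
        refine setLIntegral_mono' measurableSet_Ioi fun t ht => ?_
        rw [distFun_sum_indicator μ hmeas hdisj F c ht, ← Finset.mul_sum]
        gcongr
        exact hx.rpow_sum_le (div_pos hs hp) _
    _ = _ := by
        rw [setLIntegral_Ioi_rpow_sub_one_mul_sum_filter F (fun n => abs_nonneg (c n)) _ hs,
          Finset.mul_sum]
        simp_rw [mul_assoc]

theorem le_lorentzNorm_sum_indicator (hmeas : ∀ n, MeasurableSet (E n))
    (hdisj : Pairwise (Function.onFun Disjoint E)) (hx : Superincreasing fun n => μ (E n))
    (F : Finset ℕ) (c : ℕ → ℝ) {p s : ℝ} (hp : 0 < p) (hs : 0 < s) :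
    ENNReal.ofReal p ^ (1 / s) * ((1 - 2 ^ (-(s / p))) *
        (∑ n ∈ F, μ (E n) ^ (s / p) * ENNReal.ofReal (|c n| ^ s / s)) / 2 ^ (s / p)) ^ (1 / s)
      ≤ lorentzNorm μ p (ENNReal.ofReal s)
          (fun x => ∑ n ∈ F, (E n).indicator (fun _ => c n) x) := by
  rw [lorentzNorm_ofReal_eq μ p hs]
  gcongr
  rw [ENNReal.div_le_iff (by positivity) (by simp)]
  calc _ = ∫⁻ t in Ioi 0, ENNReal.ofReal t ^ (s - 1) *
          ∑ n ∈ F with t ≤ |c n|, (1 - 2 ^ (-(s / p))) * μ (E n) ^ (s / p) := by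
        rw [setLIntegral_Ioi_rpow_sub_one_mul_sum_filter F (fun n => abs_nonneg (c n)) _ hs,
          Finset.mul_sum]
        simp_rw [mul_assoc]
    _ ≤ ∫⁻ t in Ioi 0, 2 ^ (s / p) * (ENNReal.ofReal t ^ (s - 1) *
          distFun μ (fun x => ∑ n ∈ F, (E n).indicator (fun _ => c n) x) t ^ (s / p)) := by
        refine setLIntegral_mono' measurableSet_Ioi fun t ht => ?_
        rw [distFun_sum_indicator μ hmeas hdisj F c ht, ← Finset.mul_sum,
          mul_left_comm (2 ^ (s / p))]
        gcongr _ * ?_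
        exact hx.one_sub_mul_sum_rpow_le (div_pos hs hp).le _
    _ = _ := by rw [lintegral_const_mul' _ _ (by simp), mul_comm]

theorem tendsto_lorentzNorm_sum_range_indicator (hmeas : ∀ n, MeasurableSet (E n))
    (hdisj : Pairwise (Function.onFun Disjoint E)) (hx : Superincreasing fun n => μ (E n))
    (c : ℕ → ℝ) {p s : ℝ} (hp : 0 < p) (hs : 0 < s)
    (hsum : ∑' n, μ (E n) ^ (s / p) * ENNReal.ofReal (|c n| ^ s / s) = ⊤) :
    Tendsto (fun N => lorentzNorm μ p (ENNReal.ofReal s)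
      (fun x => ∑ n ∈ Finset.range N, (E n).indicator (fun _ => c n) x)) atTop (𝓝 ⊤) := by
  have hpartial := ENNReal.tendsto_nat_tsum fun n =>
    μ (E n) ^ (s / p) * ENNReal.ofReal (|c n| ^ s / s)
  rw [hsum] at hpartial
  have hρ : (1 : ℝ≥0∞) - 2 ^ (-(s / p)) ≠ 0 := (tsub_pos_of_lt
    (ENNReal.rpow_lt_one_of_one_lt_of_neg one_lt_two (neg_neg_of_pos (div_pos hs hp)))).ne'
  have hmul := ENNReal.Tendsto.const_mul (a := 1 - 2 ^ (-(s / p))) hpartial (Or.inl top_ne_zero)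
  rw [mul_top hρ] at hmul
  have hdiv := ENNReal.Tendsto.div_const (b := 2 ^ (s / p)) hmul (Or.inl top_ne_zero)
  rw [top_div_of_ne_top (by simp)] at hdiv
  have hlower := ENNReal.Tendsto.const_mul (a := ENNReal.ofReal p ^ (1 / s))
    (hdiv.ennrpow_const (1 / s)) (Or.inl (by simp [hs]))
  rw [top_rpow_of_pos (by positivity), mul_top (by positivity)] at hlower
  exact tendsto_nhds_top_mono hlower
    (Eventually.of_forall fun N => le_lorentzNorm_sum_indicator hmeas hdisj hx _ c hp hs)

theorem tendsto_lorentzNorm_div_lorentzNorm_sum_range_indicator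
    (hmeas : ∀ n, MeasurableSet (E n))
    (hdisj : Pairwise (Function.onFun Disjoint E)) (hx : Superincreasing fun n => μ (E n))
    (c : ℕ → ℝ) {p s s' : ℝ} (hp : 0 < p) (hs : 0 < s) (hs' : 0 < s')
    (hdiv : ∑' n, μ (E n) ^ (s / p) * ENNReal.ofReal (|c n| ^ s / s) = ⊤)
    (hconv : ∑' n, μ (E n) ^ (s' / p) * ENNReal.ofReal (|c n| ^ s' / s') ≠ ⊤) :
    Tendsto (fun N =>
      lorentzNorm μ p (ENNReal.ofReal s)
        (fun x => ∑ n ∈ Finset.range N, (E n).indicator (fun _ => c n) x) /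
      lorentzNorm μ p (ENNReal.ofReal s')
        (fun x => ∑ n ∈ Finset.range N, (E n).indicator (fun _ => c n) x)) atTop (𝓝 ⊤) := by
  obtain ⟨C, hC, hbound⟩ : ∃ C ≠ ⊤, ∀ N, lorentzNorm μ p (ENNReal.ofReal s')
      (fun x => ∑ n ∈ Finset.range N, (E n).indicator (fun _ => c n) x) ≤ C :=
    ⟨ENNReal.ofReal p ^ (1 / s') *
      (2 ^ (s' / p) * ∑' n, μ (E n) ^ (s' / p) * ENNReal.ofReal (|c n| ^ s' / s')) ^ (1 / s'),
      mul_ne_top (rpow_ne_top_of_nonneg (by positivity) ofReal_ne_top)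
        (rpow_ne_top_of_nonneg (by positivity) (mul_ne_top (by simp) hconv)),
      fun N => (lorentzNorm_sum_indicator_le hmeas hdisj hx _ c hp hs').trans (by
        gcongr
        exact ENNReal.sum_le_tsum _)⟩
  have hlim := ENNReal.Tendsto.div_const (b := C)
    (tendsto_lorentzNorm_sum_range_indicator hmeas hdisj hx c hp hs hdiv) (Or.inl top_ne_zero)
  rw [top_div_of_ne_top hC] at hlim
  exact tendsto_nhds_top_mono hlim
    (Eventually.of_forall fun N => ENNReal.div_le_div_left (hbound N) _)

end StepFunction

theorem summable_nat_add_one_rpow_iff {c : ℝ} :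
    (Summable fun n : ℕ => ((n : ℝ) + 1) ^ c) ↔ c < -1 := by
  exact_mod_cast (_root_.summable_nat_add_iff 1 (f := fun n : ℕ => (n : ℝ) ^ c)).trans
    Real.summable_nat_rpow

theorem tsum_ofReal_eq_top_of_not_summable {α : Type*} {f : α → ℝ} (hf : ∀ i, 0 ≤ f i)
    (h : ¬Summable f) : ∑' i, ENNReal.ofReal (f i) = ⊤ := by
  by_contra hne
  exact h ((ENNReal.summable_toReal hne).congr fun i => toReal_ofReal (hf i))

theorem rpow_mul_ofReal_abs_mul_toReal_rpow {x : ℝ≥0∞} (hx0 : x ≠ 0) (hxt : x ≠ ⊤) {w : ℝ}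
    (hw : 0 ≤ w) (p s : ℝ) :
    x ^ (s / p) * ENNReal.ofReal (|w * x.toReal ^ (-(1 / p))| ^ s / s)
      = ENNReal.ofReal (w ^ s / s) := by
  have hτ : 0 < x.toReal := toReal_pos hx0 hxt
  have hcancel : x.toReal ^ (s / p) * x.toReal ^ (-(1 / p) * s) = 1 := by
    rw [← Real.rpow_add hτ, show s / p + -(1 / p) * s = 0 by ring, Real.rpow_zero]
  have hxpow : x ^ (s / p) = ENNReal.ofReal (x.toReal ^ (s / p)) := by
    rw [← ofReal_rpow_of_pos hτ, ofReal_toReal hxt]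
  rw [hxpow, abs_of_nonneg (by positivity), Real.mul_rpow hw (by positivity),
    ← Real.rpow_mul hτ.le, ← ofReal_mul (by positivity)]
  congr 1
  linear_combination (w ^ s / s) * hcancel

/-- The quantitative core of Remark 6.2: for pairwise disjoint sets `E₁, E₂, …` of finite
positive measure with `μ(Eₙ) ≥ μ(E₁ ∪ ⋯ ∪ E_{n−1})`, the functions
`g_{n₀} = ∑_{n ≤ n₀} n^{−2/(q+r)} μ(Eₙ)^{−1/p} χ_{Eₙ}` satisfy
`‖g_{n₀}‖_{p,r} / ‖g_{n₀}‖_{p,q} → ∞`. -/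
theorem lorentz_ratio_tendsto_top {X : Type*} [MeasurableSpace X] (μ : Measure X)
    (p q r : ℝ) (hp : 1 < p) (hr : 1 ≤ r) (hrq : r < q)
    (E : ℕ → Set X) (hmeas : ∀ n, MeasurableSet (E n))
    (hdisj : Pairwise (Function.onFun Disjoint E))
    (hpos : ∀ n, 0 < μ (E n)) (hfin : ∀ n, μ (E n) < ⊤)
    (hgrow : ∀ n : ℕ, μ (⋃ k ∈ Finset.range n, E k) ≤ μ (E n)) :
    Tendsto (fun n₀ : ℕ =>
        lorentzNorm μ p (ENNReal.ofReal r)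
          (fun x => ∑ n ∈ Finset.range n₀, (E n).indicator
            (fun _ => ((n : ℝ) + 1) ^ (-(2 / (q + r))) * (μ (E n)).toReal ^ (-(1 / p))) x) /
        lorentzNorm μ p (ENNReal.ofReal q)
          (fun x => ∑ n ∈ Finset.range n₀, (E n).indicator
            (fun _ => ((n : ℝ) + 1) ^ (-(2 / (q + r))) * (μ (E n)).toReal ^ (-(1 / p))) x))
      atTop (nhds ⊤) := by
  have hp0 : 0 < p := by linarith
  have hr0 : 0 < r := by linarith
  have hq0 : 0 < q := by linarith
  have hx : Superincreasing fun n => μ (E n) := fun n =>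
    (measure_biUnion_finset (hdisj.set_pairwise _) fun k _ => hmeas k).symm.trans_le (hgrow n)
  have hterm : ∀ s n, μ (E n) ^ (s / p) * ENNReal.ofReal
      (|((n : ℝ) + 1) ^ (-(2 / (q + r))) * (μ (E n)).toReal ^ (-(1 / p))| ^ s / s)
        = ENNReal.ofReal (((n : ℝ) + 1) ^ (-(2 / (q + r)) * s) / s) := fun s n => by
    rw [rpow_mul_ofReal_abs_mul_toReal_rpow (hpos n).ne' (hfin n).ne (by positivity),
      ← Real.rpow_mul (by positivity)]
  refine tendsto_lorentzNorm_div_lorentzNorm_sum_range_indicator hmeas hdisj hx _ hp0 hr0 hq0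
    ?_ ?_ <;> simp_rw [hterm]
  · refine tsum_ofReal_eq_top_of_not_summable (fun n => by positivity) ?_
    rw [summable_div_const_iff hr0.ne', summable_nat_add_one_rpow_iff, not_lt, neg_mul,
      neg_le_neg_iff, div_mul_eq_mul_div, div_le_one (by positivity)]
    linarith
  · refine Summable.tsum_ofReal_ne_top ((summable_nat_add_one_rpow_iff.2 ?_).div_const q)
    rw [neg_mul, neg_lt_neg_iff, div_mul_eq_mul_div, one_lt_div (by positivity)]
    linarith
end

section
/- Fix p ∈ (1,∞) and 1 ≤ q ≤ r ≤ ∞. Let S be a finite set, μ a measure on S with μ({x}) ∈ (0,∞) for each x ∈ S, and suppose S is partitioned into A and B. Let γ : B → A be a map with |γ^{−1}(a)| = h for all a ∈ A, and suppose μ({a}) = α for all a ∈ A and μ({b}) = β for all b ∈ B. Let T be the linear operator (Tf)(x) = f(γ(x))·μ({γ(x)})/μ({x}) for x ∈ B and (Tf)(x) = 0 for x ∈ A. Then for every f supported on A, d_{Tf}(t) = (βh/α)·d_f(tβ/α) for all t > 0, and hence ‖Tf‖_{p,r} = β^{−1+1/p} h^{1/p} α^{1−1/p} ‖f‖_{p,r}.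 -/
open MeasureTheory ENNReal NNReal Set Filter

lemma measure_eq_sum_singletons {S : Type*} [MeasurableSpace S] [MeasurableSingletonClass S]
    (μ : Measure S) {s : Set S} (hs : s.Finite) :
    μ s = ∑ x ∈ hs.toFinset, μ {x} := by
  conv_lhs => rw [show s = ⋃ x ∈ hs.toFinset, {x} by simp]
  rw [measure_biUnion_finset]
  · intro x _ y _ hxy
    simp [Set.disjoint_singleton, Function.onFun, hxy]
  · exact fun x _ => measurableSet_singleton x

lemma lintegral_Ioi_comp_mul_left (g : ℝ → ℝ≥0∞) {c : ℝ} (hc : 0 < c) :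
    ∫⁻ t in Ioi (0:ℝ), g (c * t) = (ENNReal.ofReal c)⁻¹ * ∫⁻ s in Ioi (0:ℝ), g s := by
  have hme : MeasurableEmbedding (fun t : ℝ => c * t) :=
    measurableEmbedding_mulLeft₀ hc.ne'
  have hpre : (fun t : ℝ => c * t) ⁻¹' (Ioi 0) = Ioi 0 := by
    ext x; simp [mul_pos_iff_of_pos_left, hc]
  calc ∫⁻ t in Ioi (0:ℝ), g (c * t)
      = ∫⁻ s in Ioi (0:ℝ), g s ∂(Measure.map (fun t : ℝ => c * t) volume) := by
        rw [Measure.restrict_map hme.measurable measurableSet_Ioi, hpre,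
          hme.lintegral_map]
    _ = (ENNReal.ofReal c)⁻¹ * ∫⁻ s in Ioi (0:ℝ), g s := by
        rw [Real.map_volume_mul_left hc.ne', Measure.restrict_smul, lintegral_smul_measure,
          abs_of_pos (inv_pos.mpr hc), ENNReal.ofReal_inv_of_pos hc, smul_eq_mul]

lemma iSup_Ioi_comp_mul_left (F : ℝ → ℝ≥0∞) {c : ℝ} (hc : 0 < c) :
    ⨆ t ∈ Ioi (0:ℝ), F (c * t) = ⨆ s ∈ Ioi (0:ℝ), F s := by
  apply le_antisymm
  · exact iSup₂_le fun t ht => le_iSup₂_of_le (c * t) (mul_pos hc ht) le_rfl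
  · refine iSup₂_le fun s hs => le_iSup₂_of_le (s / c) (div_pos hs hc) (le_of_eq ?_)
    rw [mul_div_cancel₀ _ hc.ne']

lemma lorentz_alg (u v X D : ℝ≥0∞) (hu0 : u ≠ 0) (hut : u ≠ ⊤) (hv0 : v ≠ 0)
    (hvt : v ≠ ⊤) {R : ℝ} (hR : 0 < R) :
    (v * (X * D)) ^ R / v = (X ^ R * u ^ (1 - R)) * ((u * v * D) ^ R / (u * v)) := by
  have huu : u ^ (1 - R) * u ^ R * u⁻¹ = 1 := by
    rw [← ENNReal.rpow_add _ _ hu0 hut, sub_add_cancel, ENNReal.rpow_one,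
      ENNReal.mul_inv_cancel hu0 hut]
  simp only [div_eq_mul_inv, ENNReal.mul_inv (Or.inl hu0) (Or.inl hut),
    ENNReal.mul_rpow_of_nonneg _ _ hR.le]
  calc v ^ R * (X ^ R * D ^ R) * v⁻¹
      = (u ^ (1 - R) * u ^ R * u⁻¹) * (v ^ R * (X ^ R * D ^ R) * v⁻¹) := by
        rw [huu, one_mul]
    _ = X ^ R * u ^ (1 - R) * (u ^ R * v ^ R * D ^ R * (u⁻¹ * v⁻¹)) := by ring

lemma lorentzNorm_scale {X Y : Type*} [MeasurableSpace X] [MeasurableSpace Y]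
    (μ : Measure X) (ν : Measure Y) (p : ℝ) (hp : 0 < p) (r : ℝ≥0∞) (hr0 : r ≠ 0)
    (f : X → ℝ) (g : Y → ℝ) (C : ℝ≥0∞) (hC : C ≠ ⊤) {c : ℝ} (hc : 0 < c)
    (hd : ∀ t : ℝ, 0 < t → distFun ν g t = C * distFun μ f (c * t)) :
    lorentzNorm ν p r g = C ^ (1/p) * (ENNReal.ofReal c)⁻¹ * lorentzNorm μ p r f := by
  set u : ℝ≥0∞ := ENNReal.ofReal c with hu
  have hu0 : u ≠ 0 := by simp [hu, hc]
  have hut : u ≠ ⊤ := ENNReal.ofReal_ne_top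
  have hX : C ^ (1/p) ≠ ⊤ := ENNReal.rpow_ne_top_of_nonneg (by positivity) hC
  rcases eq_or_ne r ⊤ with hr | hr
  · subst hr
    rw [lorentzNorm, lorentzNorm, if_pos rfl, if_pos rfl]
    have step : ∀ t : ℝ, t ∈ Ioi (0:ℝ) →
        ENNReal.ofReal t * distFun ν g t ^ (1/p) =
          C ^ (1/p) * u⁻¹ * (ENNReal.ofReal (c * t) * distFun μ f (c * t) ^ (1/p)) := by
      intro t ht
      rw [hd t ht, ENNReal.mul_rpow_of_nonneg _ _ (by positivity),
        ENNReal.ofReal_mul hc.le, ← hu]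
      have huv : u⁻¹ * (u * ENNReal.ofReal t) = ENNReal.ofReal t := by
        rw [← mul_assoc, ENNReal.inv_mul_cancel hu0 hut, one_mul]
      calc ENNReal.ofReal t * (C ^ (1/p) * distFun μ f (c*t) ^ (1/p))
          = C ^ (1/p) * ((u⁻¹ * (u * ENNReal.ofReal t)) * distFun μ f (c*t) ^ (1/p)) := by
            rw [huv]; ring
        _ = C ^ (1/p) * u⁻¹ * (u * ENNReal.ofReal t * distFun μ f (c*t) ^ (1/p)) := by ring
    calc (⨆ t ∈ Ioi (0:ℝ), ENNReal.ofReal t * distFun ν g t ^ (1/p))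
        = ⨆ t ∈ Ioi (0:ℝ), C ^ (1/p) * u⁻¹ *
            (ENNReal.ofReal (c*t) * distFun μ f (c*t) ^ (1/p)) := by
          exact iSup_congr fun t => iSup_congr fun ht => step t ht
      _ = C ^ (1/p) * u⁻¹ * ⨆ t ∈ Ioi (0:ℝ),
            (ENNReal.ofReal (c*t) * distFun μ f (c*t) ^ (1/p)) := by
          simp only [ENNReal.mul_iSup]
      _ = C ^ (1/p) * u⁻¹ * ⨆ s ∈ Ioi (0:ℝ),
            (ENNReal.ofReal s * distFun μ f s ^ (1/p)) := by
          rw [iSup_Ioi_comp_mul_left (fun s => ENNReal.ofReal s * distFun μ f s ^ (1/p)) hc]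
  · -- finite r
    set R := r.toReal with hR
    have hRpos : 0 < R := ENNReal.toReal_pos hr0 hr
    have h1R : (0:ℝ) < 1/R := by positivity
    rw [lorentzNorm, lorentzNorm, if_neg hr, if_neg hr, ← hR]
    set Λ : ℝ≥0∞ := (C ^ (1/p)) ^ R * u ^ (1 - R) with hΛ
    have hΛt : Λ ≠ ⊤ := by
      apply ENNReal.mul_ne_top (ENNReal.rpow_ne_top_of_nonneg hRpos.le hX)
      simp [ENNReal.rpow_eq_top_iff, hu0, hut]
    have step : ∀ t : ℝ, t ∈ Ioi (0:ℝ) →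
        (ENNReal.ofReal t * distFun ν g t ^ (1/p)) ^ R / ENNReal.ofReal t =
          Λ * ((ENNReal.ofReal (c*t) * distFun μ f (c*t) ^ (1/p)) ^ R /
            ENNReal.ofReal (c*t)) := by
      intro t ht
      have hv0 : ENNReal.ofReal t ≠ 0 := by simp [ht.out]
      have hvt : ENNReal.ofReal t ≠ ⊤ := ENNReal.ofReal_ne_top
      rw [hd t ht, ENNReal.mul_rpow_of_nonneg C _ (by positivity),
        ENNReal.ofReal_mul hc.le, ← hu, ← mul_assoc (ENNReal.ofReal t)]
      rw [show ENNReal.ofReal t * C ^ (1/p) * distFun μ f (c*t) ^ (1/p)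
          = ENNReal.ofReal t * (C ^ (1/p) * distFun μ f (c*t) ^ (1/p)) by ring]
      exact lorentz_alg u (ENNReal.ofReal t) (C ^ (1/p)) (distFun μ f (c*t) ^ (1/p))
        hu0 hut hv0 hvt hRpos
    have hconst : (Λ * u⁻¹) ^ (1/R) = C ^ (1/p) * u⁻¹ := by
      rw [hΛ, mul_assoc, ← ENNReal.rpow_neg_one u, ← ENNReal.rpow_add (1-R) (-1) hu0 hut,
        ENNReal.mul_rpow_of_nonneg _ _ h1R.le, ← ENNReal.rpow_mul, ← ENNReal.rpow_mul,
        show R * (1/R) = 1 by field_simp, mul_one, ← ENNReal.rpow_mul u,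
        show (1 - R + -1) * (1/R) = -1 by field_simp; ring,
        ENNReal.rpow_neg_one]
    calc ENNReal.ofReal p ^ (1/R) *
          (∫⁻ t in Ioi (0:ℝ), (ENNReal.ofReal t * distFun ν g t ^ (1/p)) ^ R /
            ENNReal.ofReal t) ^ (1/R)
        = ENNReal.ofReal p ^ (1/R) *
          (Λ * u⁻¹ * ∫⁻ s in Ioi (0:ℝ), (ENNReal.ofReal s * distFun μ f s ^ (1/p)) ^ R /
            ENNReal.ofReal s) ^ (1/R) := by
          rw [setLIntegral_congr_fun measurableSet_Ioi step,
            lintegral_const_mul' Λ _ hΛt,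
            lintegral_Ioi_comp_mul_left
              (fun s => (ENNReal.ofReal s * distFun μ f s ^ (1/p)) ^ R / ENNReal.ofReal s) hc,
            ← hu, mul_assoc Λ u⁻¹]
      _ = C ^ (1/p) * u⁻¹ * (ENNReal.ofReal p ^ (1/R) *
          (∫⁻ s in Ioi (0:ℝ), (ENNReal.ofReal s * distFun μ f s ^ (1/p)) ^ R /
            ENNReal.ofReal s) ^ (1/R)) := by
          rw [ENNReal.mul_rpow_of_nonneg (Λ * u⁻¹) _ h1R.le, hconst]; ring

/-- The transference computation of Lemma 3.2: on a finite atomic space partitioned into `A`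
(atoms of mass `α`) and `B` (atoms of mass `β`), with `γ : B → A` having fibers of cardinality
`h`, the operator `(Tf)(x) = f(γ(x))·α/β` on `B` (and `0` on `A`) satisfies, for `f` supported
on `A`, `d_{Tf}(t) = (βh/α)·d_f(tβ/α)` for all `t > 0`, and hence
`‖Tf‖_{p,r} = β^{−1+1/p} h^{1/p} α^{1−1/p} ‖f‖_{p,r}`. -/
theorem transfer_operator_norm {S : Type*} [Fintype S] [MeasurableSpace S]
    [MeasurableSingletonClass S] (μ : Measure S)
    (p : ℝ) (hp : 1 < p) (q r : ℝ≥0∞) (hq : 1 ≤ q) (hqr : q ≤ r)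
    (A B : Set S) (hpart : A ∪ B = Set.univ) (hAB : Disjoint A B)
    (γ : S → S) (hγ : ∀ x ∈ B, γ x ∈ A)
    (α β : ℝ) (hα : 0 < α) (hβ : 0 < β) (h : ℕ)
    (hμA : ∀ a ∈ A, μ {a} = ENNReal.ofReal α)
    (hμB : ∀ b ∈ B, μ {b} = ENNReal.ofReal β)
    (hfib : ∀ a ∈ A, (B ∩ γ ⁻¹' {a}).ncard = h)
    (f : S → ℝ) (hsupp : ∀ x, x ∉ A → f x = 0) :
    (∀ t : ℝ, 0 < t →
        distFun μ (B.indicator fun x => f (γ x) * (α / β)) t =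
          ENNReal.ofReal β * (h : ℝ≥0∞) / ENNReal.ofReal α * distFun μ f (t * β / α)) ∧
      lorentzNorm μ p r (B.indicator fun x => f (γ x) * (α / β)) =
        ENNReal.ofReal β ^ (-1 + 1 / p) * (h : ℝ≥0∞) ^ (1 / p) *
          ENNReal.ofReal α ^ (1 - 1 / p) * lorentzNorm μ p r f := by
  -- basic positivity facts
  have ha0 : ENNReal.ofReal α ≠ 0 := by simp [hα]
  have hat : ENNReal.ofReal α ≠ ⊤ := ENNReal.ofReal_ne_top
  have hb0 : ENNReal.ofReal β ≠ 0 := by simp [hβ]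
  have hbt : ENNReal.ofReal β ≠ ⊤ := ENNReal.ofReal_ne_top
  have part1 : ∀ t : ℝ, 0 < t →
      distFun μ (B.indicator fun x => f (γ x) * (α / β)) t =
        ENNReal.ofReal β * (h : ℝ≥0∞) / ENNReal.ofReal α * distFun μ f (t * β / α) := by
    intro t ht
    have hs : 0 < t * β / α := by positivity
    set E : Set S := {x | t * β / α ≤ |f x|} with hE
    have hEA : E ⊆ A := by
      intro x hx
      by_contra hxA
      rw [hE, mem_setOf_eq, hsupp x hxA, abs_zero] at hx
      linarith
    have hset : {x | t ≤ |B.indicator (fun x => f (γ x) * (α / β)) x|} = B ∩ γ ⁻¹' E := by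
      ext x
      by_cases hxB : x ∈ B
      · simp only [mem_setOf_eq, Set.indicator_of_mem hxB, mem_inter_iff, hxB, true_and,
          mem_preimage, hE]
        rw [abs_mul, abs_of_pos (div_pos hα hβ), ← div_le_iff₀ (div_pos hα hβ),
          div_div_eq_mul_div]
      · simp [Set.indicator_of_notMem hxB, hxB, not_le, ht]
    have hfinE : E.Finite := Set.toFinite _
    have hUnion : B ∩ γ ⁻¹' E = ⋃ a ∈ hfinE.toFinset, (B ∩ γ ⁻¹' {a}) := by
      ext x
      simp only [mem_inter_iff, mem_preimage, mem_iUnion, hfinE.mem_toFinset, exists_prop,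
        mem_singleton_iff]
      constructor
      · rintro ⟨hxB, hxE⟩; exact ⟨γ x, hxE, hxB, rfl⟩
      · rintro ⟨a, haE, hxB, hxa⟩; exact ⟨hxB, hxa ▸ haE⟩
    have hμfib : ∀ a ∈ E, μ (B ∩ γ ⁻¹' {a}) = ENNReal.ofReal β * (h : ℝ≥0∞) := by
      intro a ha
      have hfin : (B ∩ γ ⁻¹' {a}).Finite := Set.toFinite _
      rw [measure_eq_sum_singletons μ hfin,
        Finset.sum_congr rfl (fun x hx => hμB x ((hfin.mem_toFinset.mp hx).1)),
        Finset.sum_const, nsmul_eq_mul,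
        show hfin.toFinset.card = h from by
          rw [← Set.ncard_eq_toFinset_card _ hfin]; exact hfib a (hEA ha)]
      ring
    have hμE : μ E = ENNReal.ofReal α * (hfinE.toFinset.card : ℝ≥0∞) := by
      rw [measure_eq_sum_singletons μ hfinE,
        Finset.sum_congr rfl (fun x hx => hμA x (hEA (hfinE.mem_toFinset.mp hx))),
        Finset.sum_const, nsmul_eq_mul]
      ring
    have hμT : μ (B ∩ γ ⁻¹' E) =
        ENNReal.ofReal β * (h : ℝ≥0∞) * (hfinE.toFinset.card : ℝ≥0∞) := by
      rw [hUnion, measure_biUnion_finset]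
      · rw [Finset.sum_congr rfl (fun a ha => hμfib a (hfinE.mem_toFinset.mp ha)),
          Finset.sum_const, nsmul_eq_mul]
        ring
      · intro a _ b _ hab
        rw [Function.onFun, Set.disjoint_left]
        rintro x ⟨_, hxa⟩ ⟨_, hxb⟩
        exact hab (by rw [← hxa, ← hxb])
      · exact fun a _ => (Set.toFinite _).measurableSet
    have hdist : distFun μ f (t * β / α) = μ E := rfl
    rw [distFun, hset, hμT, hdist, hμE,
      show ENNReal.ofReal β * (h : ℝ≥0∞) / ENNReal.ofReal α *
          (ENNReal.ofReal α * (hfinE.toFinset.card : ℝ≥0∞)) =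
        ENNReal.ofReal β * (h : ℝ≥0∞) / ENNReal.ofReal α * ENNReal.ofReal α *
          (hfinE.toFinset.card : ℝ≥0∞) by ring,
      ENNReal.div_mul_cancel ha0 hat]
  refine ⟨part1, ?_⟩
  have hr0 : r ≠ 0 := (lt_of_lt_of_le zero_lt_one (hq.trans hqr)).ne'
  have hCt : ENNReal.ofReal β * (h : ℝ≥0∞) / ENNReal.ofReal α ≠ ⊤ := by
    rw [div_eq_mul_inv]
    exact ENNReal.mul_ne_top (ENNReal.mul_ne_top hbt (ENNReal.natCast_ne_top h))
      (ENNReal.inv_ne_top.mpr ha0)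
  have hscale := lorentzNorm_scale μ μ p (by linarith) r hr0 f
    (B.indicator fun x => f (γ x) * (α / β))
    (ENNReal.ofReal β * (h : ℝ≥0∞) / ENNReal.ofReal α) hCt (div_pos hβ hα)
    (fun t ht => by rw [part1 t ht, show β / α * t = t * β / α by ring])
  rw [hscale]
  congr 1
  -- constant identity
  have hinv : (ENNReal.ofReal (β / α))⁻¹ = ENNReal.ofReal α / ENNReal.ofReal β := by
    rw [← ENNReal.ofReal_inv_of_pos (div_pos hβ hα), inv_div,
      ENNReal.ofReal_div_of_pos hβ]
  rw [hinv, div_eq_mul_inv (ENNReal.ofReal β * (h : ℝ≥0∞)) (ENNReal.ofReal α),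
    div_eq_mul_inv (ENNReal.ofReal α) (ENNReal.ofReal β),
    ENNReal.mul_rpow_of_nonneg _ _ (by positivity : (0:ℝ) ≤ 1/p),
    ENNReal.mul_rpow_of_nonneg _ _ (by positivity : (0:ℝ) ≤ 1/p),
    ENNReal.inv_rpow,
    show (-1 + 1/p : ℝ) = -1 + 1/p from rfl,
    ENNReal.rpow_add (-1) (1/p) hb0 hbt, ENNReal.rpow_neg_one,
    show (1 - 1/p : ℝ) = 1 + -(1/p) by ring,
    ENNReal.rpow_add 1 (-(1/p)) ha0 hat, ENNReal.rpow_one, ENNReal.rpow_neg]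
  ring
end

section
/- Let p ∈ (1,∞) and 1 ≤ q ≤ r ≤ ∞. Then for any measure space (X,μ), L^{p,q}(X) ⊂ L^{p,r}(X), and there exists a constant C(p,q,r), independent of (X,μ), such that ‖f‖_{p,r} ≤ C(p,q,r)‖f‖_{p,q} for all f ∈ L^{p,q}(X). -/
open MeasureTheory ENNReal NNReal Set Filter

/-!
Write `φ t = t d_f(t)^{1/p}`. Since `d_f` is nonincreasing, `φ s ≥ φ t / 2` for `s ∈ (t/2, t]`, so
integrating `φ^q ds/s` over that interval bounds the weak norm `sup φ` by
`4 (∫ φ^q ds/s)^{1/q}`. For finite `r`, `∫ φ^r ds/s ≤ (sup φ)^{r-q} ∫ φ^q ds/s`, and the weak bound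
turns this into `‖f‖_{p,r} ≤ 4 ‖f‖_{p,q}`; the prefactor `p^{1/r} ≤ p^{1/q}` is harmless as `p ≥ 1`.
-/
theorem lintegral_rpow_div_le_mul {α : Type*} [MeasurableSpace α] {ν : Measure α}
    {φ w : α → ℝ≥0∞} {M : ℝ≥0∞} (hM : M ≠ ⊤) (hφ : ∀ᵐ x ∂ν, φ x ≤ M) {q r : ℝ}
    (hq : 0 ≤ q) (hqr : q ≤ r) :
    ∫⁻ x, φ x ^ r / w x ∂ν ≤ M ^ (r - q) * ∫⁻ x, φ x ^ q / w x ∂ν := by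
  rw [← lintegral_const_mul' _ _ (rpow_ne_top_of_nonneg (sub_nonneg.2 hqr) hM)]
  refine lintegral_mono_ae (hφ.mono fun x hx => ?_)
  have h_split : φ x ^ r = φ x ^ (r - q) * φ x ^ q := by
    rw [← rpow_add_of_nonneg _ _ (sub_nonneg.2 hqr) hq, sub_add_cancel]
  rw [h_split, mul_div_assoc]
  gcongr

theorem ofReal_mul_rpow_le_lintegral {h : ℝ → ℝ≥0∞} (h_anti : Antitone h) {q : ℝ}
    (hq : 0 ≤ q) {t : ℝ} (ht : 0 < t) :
    (ENNReal.ofReal t * h t) ^ q ≤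
      2 * 2 ^ q * ∫⁻ s in Ioi 0, (ENNReal.ofReal s * h s) ^ q / ENNReal.ofReal s := by
  set x := ENNReal.ofReal t * h t
  have ht_ne : ENNReal.ofReal t ≠ 0 := by simpa using ht
  have ht_half : ENNReal.ofReal t = 2 * ENNReal.ofReal (t / 2) := by
    rw [← ENNReal.ofReal_ofNat 2, ← ENNReal.ofReal_mul zero_le_two]; ring_nf
  calc x ^ q = x ^ q / ENNReal.ofReal t * ENNReal.ofReal t :=
        (ENNReal.div_mul_cancel ht_ne ofReal_ne_top).symm
    _ = 2 * ∫⁻ _ in Ioc (t / 2) t, x ^ q / ENNReal.ofReal t := by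
        rw [setLIntegral_const, Real.volume_Ioc, sub_half t, ht_half, mul_left_comm]
    _ ≤ 2 * ∫⁻ s in Ioc (t / 2) t,
          2 ^ q * ((ENNReal.ofReal s * h s) ^ q / ENNReal.ofReal s) := by
        gcongr 2 * ?_
        refine setLIntegral_mono' measurableSet_Ioc fun s hs => ?_
        have hts : ENNReal.ofReal t ≤ 2 * ENNReal.ofReal s := by
          rw [← ENNReal.ofReal_ofNat 2, ← ENNReal.ofReal_mul zero_le_two]
          exact ENNReal.ofReal_le_ofReal (by linarith [hs.1])
        have hx : x ≤ 2 * ENNReal.ofReal s * h s := mul_le_mul' hts (h_anti hs.2)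
        calc x ^ q / ENNReal.ofReal t
            ≤ (2 * ENNReal.ofReal s * h s) ^ q / ENNReal.ofReal s := by
              gcongr
              exact hs.2
          _ = 2 ^ q * ((ENNReal.ofReal s * h s) ^ q / ENNReal.ofReal s) := by
              rw [mul_assoc, ENNReal.mul_rpow_of_nonneg _ _ hq, mul_div_assoc]
    _ ≤ 2 * 2 ^ q * ∫⁻ s in Ioi 0, (ENNReal.ofReal s * h s) ^ q / ENNReal.ofReal s := by
        rw [lintegral_const_mul' _ _ (by simp), mul_assoc]
        gcongr
        exact fun s hs => (half_pos ht).trans hs.1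

theorem ofReal_mul_le_four_mul_lintegral {h : ℝ → ℝ≥0∞} (h_anti : Antitone h) {q : ℝ}
    (hq : 1 ≤ q) {t : ℝ} (ht : 0 < t) :
    ENNReal.ofReal t * h t ≤
      4 * (∫⁻ s in Ioi 0, (ENNReal.ofReal s * h s) ^ q / ENNReal.ofReal s) ^ (1 / q) := by
  have hq0 : 0 < q := by linarith
  have h_two : (2 : ℝ≥0∞) ≤ 2 ^ q := by
    simpa using ENNReal.rpow_le_rpow_of_exponent_le one_le_two hq
  calc ENNReal.ofReal t * h t = ((ENNReal.ofReal t * h t) ^ q) ^ (1 / q) := by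
        rw [one_div, ENNReal.rpow_rpow_inv hq0.ne']
    _ ≤ (2 ^ q * 2 ^ q * ∫⁻ s in Ioi 0, (ENNReal.ofReal s * h s) ^ q / ENNReal.ofReal s) ^
          (1 / q) := by
        gcongr
        exact (ofReal_mul_rpow_le_lintegral h_anti hq0.le ht).trans (by gcongr)
    _ = 4 * (∫⁻ s in Ioi 0, (ENNReal.ofReal s * h s) ^ q / ENNReal.ofReal s) ^ (1 / q) := by
        rw [← ENNReal.mul_rpow_of_nonneg _ _ hq0.le, ENNReal.mul_rpow_of_nonneg _ _ (by positivity),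
          one_div, ENNReal.rpow_rpow_inv hq0.ne']
        norm_num

theorem lintegral_rpow_div_root_le_four_mul {h : ℝ → ℝ≥0∞} (h_anti : Antitone h) {q r : ℝ}
    (hq : 1 ≤ q) (hqr : q ≤ r) :
    (∫⁻ s in Ioi 0, (ENNReal.ofReal s * h s) ^ r / ENNReal.ofReal s) ^ (1 / r) ≤
      4 * (∫⁻ s in Ioi 0, (ENNReal.ofReal s * h s) ^ q / ENNReal.ofReal s) ^ (1 / q) := by
  set I := ∫⁻ s in Ioi 0, (ENNReal.ofReal s * h s) ^ q / ENNReal.ofReal s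
  set J := I ^ (1 / q) with hJ_def
  have hq0 : 0 < q := by linarith
  have hr0 : 0 < r := by linarith
  rcases eq_or_ne J ⊤ with hJ | hJ
  · simp [hJ]
  have h_sup : ∀ᵐ s ∂volume.restrict (Ioi (0 : ℝ)), ENNReal.ofReal s * h s ≤ 4 * J :=
    (ae_restrict_mem measurableSet_Ioi).mono fun s hs =>
      ofReal_mul_le_four_mul_lintegral h_anti hq hs
  have hJ_le : J ≤ 4 * J := le_mul_of_one_le_left' (by norm_num)
  calc (∫⁻ s in Ioi 0, (ENNReal.ofReal s * h s) ^ r / ENNReal.ofReal s) ^ (1 / r)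
      ≤ ((4 * J) ^ (r - q) * J ^ q) ^ (1 / r) := by
        have hI : I = J ^ q := by rw [hJ_def, one_div, ENNReal.rpow_inv_rpow hq0.ne']
        gcongr
        rw [← hI]
        exact lintegral_rpow_div_le_mul (by finiteness) h_sup hq0.le hqr
    _ ≤ ((4 * J) ^ (r - q) * (4 * J) ^ q) ^ (1 / r) := by gcongr
    _ = 4 * J := by
        rw [← ENNReal.rpow_add_of_nonneg _ _ (sub_nonneg.2 hqr) hq0.le, sub_add_cancel, one_div,
          ENNReal.rpow_rpow_inv hr0.ne']

theorem antitone_distFun_rpow {X : Type*} [MeasurableSpace X] (μ : Measure X) (f : X → ℝ)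
    {e : ℝ} (he : 0 ≤ e) : Antitone fun t => distFun μ f t ^ e :=
  fun _ _ hst => ENNReal.rpow_le_rpow (measure_mono fun _ hx => hst.trans hx) he

section Lorentz

variable {X : Type*} [MeasurableSpace X] (μ : Measure X) {p : ℝ} (f : X → ℝ)

theorem lorentzNorm_top_le_four_mul (hp : 1 ≤ p) {q : ℝ≥0∞} (hq : 1 ≤ q) :
    lorentzNorm μ p ⊤ f ≤ 4 * lorentzNorm μ p q f := by
  rcases eq_or_ne q ⊤ with rfl | hq_top
  · exact le_mul_of_one_le_left' (by norm_num)
  have hq1 : 1 ≤ q.toReal := by simpa using ENNReal.toReal_mono hq_top hq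
  rw [lorentzNorm, lorentzNorm, if_pos rfl, if_neg hq_top]
  refine iSup₂_le fun t ht => ?_
  calc ENNReal.ofReal t * distFun μ f t ^ (1 / p)
      ≤ 4 * (∫⁻ s in Ioi 0,
          (ENNReal.ofReal s * distFun μ f s ^ (1 / p)) ^ q.toReal / ENNReal.ofReal s) ^
            (1 / q.toReal) :=
        ofReal_mul_le_four_mul_lintegral (antitone_distFun_rpow μ f (by positivity)) hq1 ht
    _ ≤ _ := by
        gcongr
        exact le_mul_of_one_le_left' (ENNReal.one_le_rpow (one_le_ofReal.2 hp) (by positivity))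

theorem lorentzNorm_le_four_mul_of_ne_top (hp : 1 ≤ p) {q r : ℝ≥0∞} (hq : 1 ≤ q) (hqr : q ≤ r)
    (hr : r ≠ ⊤) : lorentzNorm μ p r f ≤ 4 * lorentzNorm μ p q f := by
  have hq_top : q ≠ ⊤ := ne_top_of_le_ne_top hr hqr
  have hq1 : 1 ≤ q.toReal := by simpa using ENNReal.toReal_mono hq_top hq
  have hqr' : q.toReal ≤ r.toReal := ENNReal.toReal_mono hr hqr
  rw [lorentzNorm, lorentzNorm, if_neg hr, if_neg hq_top, mul_left_comm]
  gcongr ?_ * ?_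
  · exact ENNReal.rpow_le_rpow_of_exponent_le (one_le_ofReal.2 hp)
      (one_div_le_one_div_of_le (by positivity) hqr')
  · exact lintegral_rpow_div_root_le_four_mul (antitone_distFun_rpow μ f (by positivity)) hq1 hqr'

theorem lorentzNorm_le_four_mul (hp : 1 ≤ p) {q r : ℝ≥0∞} (hq : 1 ≤ q) (hqr : q ≤ r) :
    lorentzNorm μ p r f ≤ 4 * lorentzNorm μ p q f := by
  rcases eq_or_ne r ⊤ with rfl | hr
  · exact lorentzNorm_top_le_four_mul μ f hp hq
  · exact lorentzNorm_le_four_mul_of_ne_top μ f hp hq hqr hr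

end Lorentz

/-- Nestedness of Lorentz spaces: for `1 < p < ∞` and `1 ≤ q ≤ r ≤ ∞` there is a constant
`C(p,q,r)`, independent of the measure space, with `‖f‖_{p,r} ≤ C ‖f‖_{p,q}`. -/
theorem lorentz_embedding (p : ℝ) (hp : 1 < p) (q r : ℝ≥0∞) (hq : 1 ≤ q) (hqr : q ≤ r) :
    ∃ C : ℝ≥0, 0 < C ∧ ∀ (X : Type) (_ : MeasurableSpace X) (μ : Measure X)
      (f : X → ℝ), Measurable f →
      lorentzNorm μ p r f ≤ C * lorentzNorm μ p q f :=
  ⟨4, by norm_num, fun _ _ μ f _ => by exact_mod_cast lorentzNorm_le_four_mul μ f hp.le hq hqr⟩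
end
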